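/- Let F = F_{2^n} with a fixed basis (ξ_0,…,ξ_{n−1}) over F_2, and for y ∈ F write y = Σ_i y_i ξ_i with y_i ∈ F_2. Let g : F → F be an arbitrary function, let Π : F → F, and define f : F × F → F by f(x,y) = x·Π(y) + g(y). Then Π is a permutation of F if and only if for every nonzero F_2-linear functional ℓ : F → F_2, every subset Λ ⊆ {0,…,n−1}, and every (a,b) ∈ F × F with (a,b) ≠ (0,0), the Boolean function (x,y) ↦ ℓ(f(x+a, y+b)) + ℓ(f(x,y)) + Σ_{i∈Λ} y_i b_i on F × F is balanced, i.e. takes each of the two values of F_2 exactly 2^{2n−1} times. (That is, every component function of f is shifted-bent with respect to any subset of the y-coordinate indices if and only if Π is a permutation.) -/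

import Mathlib

/-!
Put `D(x, y) = f(x + a, y + b) + f(x, y) = x·(Π(y + b) + Π(y)) + (a term depending only on y)`.
If `b ≠ 0` and `Π` is injective, then for each fixed `y` the map `x ↦ ℓ(D(x, y))` is a nonzero
affine functional, so it stays balanced after adding any function of `y` such as `Σ_{i∈Λ} yᵢbᵢ`.
If `b = 0` then `D(x, y) = a·Π(y)`, and `y ↦ ℓ(a·Π(y))` is balanced because `Π` permutes `F`.

Conversely, `a = 1`, `b = 0`, `Λ = ∅` shows that every component `ℓ ∘ Π` is balanced. If `v` had
no preimage, count the pairs `(ℓ, y)` with `ℓ(Π y) = ℓ(v)`: each `y` contributes `|F|/2`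
functionals, while each `ℓ ≠ 0` contributes `|F|/2` points and `ℓ = 0` contributes `|F|`.
-/

open Function

def IsBalanced {α : Type*} (F : α → ZMod 2) : Prop :=
  ∀ c, 2 * Nat.card {x // F x = c} = Nat.card α

theorem Nat.card_subtype_prod_eq_sum {α β : Type*} [Fintype α] [Finite β] (P : α × β → Prop) :
    Nat.card {p // P p} = ∑ x, Nat.card {y // P (x, y)} := by
  have e : {p // P p} ≃ Σ x, {y // P (x, y)} :=
    Equiv.subtypeProdEquivSigmaSubtype fun x y => P (x, y)
  rw [Nat.card_congr e, Nat.card_sigma]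

theorem Nat.sum_card_subtype_comm {α β : Type*} [Fintype α] [Fintype β] (r : α → β → Prop) :
    ∑ x, Nat.card {y // r x y} = ∑ y, Nat.card {x // r x y} := by
  rw [← Nat.card_subtype_prod_eq_sum fun p => r p.1 p.2,
    ← Nat.card_subtype_prod_eq_sum fun p => r p.2 p.1]
  exact Nat.card_congr ((Equiv.prodComm α β).subtypeEquiv fun _ => Iff.rfl)

namespace IsBalanced

variable {α β : Type*}

theorem iff_card_eq {F : α → ZMod 2} {m : ℕ} (h : Nat.card α = 2 * m) :
    IsBalanced F ↔ ∀ c, Nat.card {x // F x = c} = m := by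
  refine forall_congr' fun c => ?_
  omega

theorem add_const {F : α → ZMod 2} (hF : IsBalanced F) (d : ZMod 2) :
    IsBalanced fun x => F x + d := fun c => by
  rw [← hF (c - d), Nat.card_congr (Equiv.subtypeEquivRight fun x => eq_sub_iff_add_eq.symm)]

theorem comp_equiv {F : α → ZMod 2} (hF : IsBalanced F) (e : β ≃ α) :
    IsBalanced fun y => F (e y) :=
  fun c => by
    rw [Nat.card_congr (e.subtypeEquiv (q := fun x => F x = c) fun _ => Iff.rfl), hF c,
      Nat.card_congr e]

theorem of_forall_fst [Finite α] [Finite β] {F : α × β → ZMod 2}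
    (h : ∀ x, IsBalanced fun y => F (x, y)) : IsBalanced F := fun c => by
  have := Fintype.ofFinite α
  simp only [Nat.card_subtype_prod_eq_sum, Finset.mul_sum, h _ c, Finset.sum_const,
    Finset.card_univ, smul_eq_mul, Nat.card_prod, Nat.card_eq_fintype_card]

theorem of_forall_snd [Finite α] [Finite β] {F : α × β → ZMod 2}
    (h : ∀ y, IsBalanced fun x => F (x, y)) : IsBalanced F := by
  simpa using (of_forall_fst (F := fun p => F (p.2, p.1)) h).comp_equiv (Equiv.prodComm α β)

theorem of_comp_snd [Finite α] [Nonempty α] [Finite β] {G : β → ZMod 2}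
    (h : IsBalanced fun p : α × β => G p.2) : IsBalanced G := fun c => by
  have := Fintype.ofFinite α
  have hc := h c
  simp only [Nat.card_subtype_prod_eq_sum, Finset.sum_const, Finset.card_univ, smul_eq_mul,
    Nat.card_prod, ← Nat.card_eq_fintype_card] at hc
  exact Nat.eq_of_mul_eq_mul_left (Nat.card_pos (α := α)) (by rw [← hc]; ring)

end IsBalanced

theorem LinearMap.isBalanced {V : Type*} [AddCommGroup V] [Module (ZMod 2) V] [Finite V]
    {φ : V →ₗ[ZMod 2] ZMod 2} (hφ : φ ≠ 0) : IsBalanced φ := fun c => by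
  obtain ⟨v, hv⟩ : ∃ v, φ v = 1 := by
    obtain ⟨v, hv⟩ : ∃ v, φ v ≠ 0 := by
      by_contra! h
      exact hφ (LinearMap.ext h)
    refine ⟨v, ?_⟩
    generalize φ v = z at hv
    revert z; decide
  have e : {x // φ x = c} ≃ {x // ¬ φ x = c} :=
    (Equiv.addRight v).subtypeEquiv fun x => by
      simp only [Equiv.coe_addRight, map_add, hv]
      generalize φ x = z; revert z c; decide
  have := Fintype.ofFinite V
  rw [two_mul]
  nth_rw 2 [Nat.card_congr e]
  simp only [Nat.card_eq_fintype_card, Fintype.card_subtype_compl]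
  have := Fintype.card_subtype_le fun x => φ x = c
  omega

theorem LinearMap.comp_mulLeft_ne_zero {K F : Type*} [CommSemiring K] [DivisionRing F]
    [Algebra K F] {ℓ : F →ₗ[K] K} (hℓ : ℓ ≠ 0) {a : F} (ha : a ≠ 0) :
    ℓ ∘ₗ LinearMap.mulLeft K a ≠ 0 := by
  intro h
  refine hℓ (LinearMap.ext fun z => ?_)
  simpa [mul_inv_cancel_left₀ ha] using LinearMap.congr_fun h (a⁻¹ * z)

theorem bijective_of_forall_isBalanced {V : Type*} [AddCommGroup V] [Module (ZMod 2) V] [Finite V]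
    {π : V → V} (h : ∀ ℓ : Module.Dual (ZMod 2) V, ℓ ≠ 0 → IsBalanced fun y => ℓ (π y)) :
    Bijective π := by
  classical
  let e := (Module.finBasis (ZMod 2) V).toDualEquiv.toEquiv
  have := Finite.of_equiv V e
  have := Fintype.ofFinite V
  have := Fintype.ofFinite (Module.Dual (ZMod 2) V)
  refine Finite.surjective_iff_bijective.mp fun v => ?_
  by_contra! hv
  have hcount := Nat.sum_card_subtype_comm fun (ℓ : Module.Dual (ZMod 2) V) y => ℓ (π y) = ℓ v
  have hℓ (ℓ : Module.Dual (ZMod 2) V) :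
      2 * Nat.card {y // ℓ (π y) = ℓ v} = Nat.card V + if ℓ = 0 then Nat.card V else 0 := by
    by_cases hℓ : ℓ = 0
    · simp [hℓ, two_mul]
    · rw [if_neg hℓ, add_zero]
      exact h ℓ hℓ (ℓ v)
  have hy (y : V) : 2 * Nat.card {ℓ : Module.Dual (ZMod 2) V // ℓ (π y) = ℓ v} = Nat.card V := by
    have hev : Module.Dual.eval (ZMod 2) V (π y - v) ≠ 0 :=
      (Module.eval_apply_eq_zero_iff _ _).not.mpr (sub_ne_zero.mpr (hv y))
    rw [Nat.card_congr e, ← LinearMap.isBalanced hev 0,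
      Nat.card_congr (Equiv.subtypeEquivRight fun ℓ => ?_)]
    rw [Module.Dual.eval_apply, map_sub, sub_eq_zero]
  have := congrArg (2 * ·) hcount
  simp only [Finset.mul_sum, hℓ, hy, Finset.sum_add_distrib, Finset.sum_ite_eq', Finset.mem_univ,
    if_true, Finset.sum_const, Finset.card_univ, smul_eq_mul] at this
  rw [← Nat.card_eq_fintype_card, ← Nat.card_eq_fintype_card, ← Nat.card_congr e] at this
  have := Nat.card_pos (α := V)
  omega

def maioranaMcFarland {F : Type*} [Mul F] [Add F] (π g : F → F) (p : F × F) : F :=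
  p.1 * π p.2 + g p.2

section MaioranaMcFarland

variable {F : Type*}

theorem maioranaMcFarland_add_add [CommRing F] (π g : F → F) (p : F × F) (a b : F) :
    maioranaMcFarland π g (p.1 + a, p.2 + b) + maioranaMcFarland π g p
      = p.1 * (π (p.2 + b) + π p.2) + (a * π (p.2 + b) + g (p.2 + b) + g p.2) := by
  simp only [maioranaMcFarland]
  ring

theorem maioranaMcFarland_add_fst [CommRing F] [CharP F 2] (π g : F → F) (p : F × F) (a : F) :
    maioranaMcFarland π g (p.1 + a, p.2) + maioranaMcFarland π g p = a * π p.2 := by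
  simp only [maioranaMcFarland]
  linear_combination (p.1 * π p.2 + g p.2) * CharTwo.two_eq_zero (R := F)

variable [Field F] [Finite F] [Algebra (ZMod 2) F] {π : F → F} (g : F → F)
  {ℓ : F →ₗ[ZMod 2] ZMod 2}

theorem isBalanced_maioranaMcFarland_shift_fst (hπ : Bijective π) (hℓ : ℓ ≠ 0) {a : F}
    (ha : a ≠ 0) :
    IsBalanced fun p : F × F =>
      ℓ (maioranaMcFarland π g (p.1 + a, p.2)) + ℓ (maioranaMcFarland π g p) := by
  have := charP_of_injective_algebraMap (algebraMap (ZMod 2) F).injective 2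
  refine IsBalanced.of_forall_fst fun x => ?_
  convert (LinearMap.isBalanced (ℓ.comp_mulLeft_ne_zero hℓ ha)).comp_equiv
    (Equiv.ofBijective π hπ) using 2 with y
  rw [← map_add, maioranaMcFarland_add_fst π g (x, y)]
  rfl

theorem isBalanced_maioranaMcFarland_shift_snd (hπ : Injective π) (hℓ : ℓ ≠ 0) (a : F) {b : F}
    (hb : b ≠ 0) (s : F → ZMod 2) :
    IsBalanced fun p : F × F =>
      ℓ (maioranaMcFarland π g (p.1 + a, p.2 + b)) + ℓ (maioranaMcFarland π g p) + s p.2 := by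
  have := charP_of_injective_algebraMap (algebraMap (ZMod 2) F).injective 2
  refine IsBalanced.of_forall_snd fun y => ?_
  have hπb : π (y + b) + π y ≠ 0 := by
    rw [Ne, add_eq_zero_iff_eq_neg, CharTwo.neg_eq]
    exact fun h => hb (by simpa using hπ h)
  convert (LinearMap.isBalanced (ℓ.comp_mulLeft_ne_zero hℓ hπb)).add_const
    (ℓ (a * π (y + b) + g (y + b) + g y) + s y) using 2 with x
  rw [← map_add, maioranaMcFarland_add_add π g (x, y), map_add, LinearMap.comp_apply,
    LinearMap.mulLeft_apply, mul_comm, add_assoc]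

end MaioranaMcFarland

/-- for `f(x,y) = x·Π(y) + g(y)` on F_{2ⁿ} × F_{2ⁿ} (with
coordinates taken w.r.t. a fixed basis `B` of F_{2ⁿ} over F₂), the map `Π` is a
permutation of F_{2ⁿ} iff every component function `ℓ ∘ f` (for nonzero
F₂-linear functionals `ℓ`) is shifted-bent with respect to any subset `Λ` of
the `y`-coordinate indices: for all `(a,b) ≠ (0,0)` the function
`(x,y) ↦ ℓ(f(x+a, y+b)) + ℓ(f(x,y)) + Σ_{i∈Λ} yᵢbᵢ` takes each of the two
values of F₂ exactly `2^{2n−1}` times. -/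
theorem stmt18 (n : ℕ) (hn : 0 < n)
    (B : Module.Basis (Fin n) (ZMod 2) (GaloisField 2 n))
    (g : GaloisField 2 n → GaloisField 2 n)
    (π : GaloisField 2 n → GaloisField 2 n)
    (f : GaloisField 2 n × GaloisField 2 n → GaloisField 2 n)
    (hf : ∀ x y : GaloisField 2 n, f (x, y) = x * π y + g y) :
    Bijective π ↔
    ∀ ℓ : GaloisField 2 n →ₗ[ZMod 2] ZMod 2, ℓ ≠ 0 →
      ∀ (Λ : Finset (Fin n)) (a b : GaloisField 2 n), (a, b) ≠ (0, 0) →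
        ∀ c : ZMod 2,
          Nat.card {p : GaloisField 2 n × GaloisField 2 n //
            ℓ (f (p.1 + a, p.2 + b)) + ℓ (f p)
              + ∑ i ∈ Λ, B.repr p.2 i * B.repr b i = c}
            = 2 ^ (2 * n - 1) := by
  obtain rfl : f = maioranaMcFarland π g := funext fun p => hf p.1 p.2
  have hcard : Nat.card (GaloisField 2 n × GaloisField 2 n) = 2 * 2 ^ (2 * n - 1) := by
    rw [Nat.card_prod, GaloisField.card 2 n hn.ne', ← pow_add, ← pow_succ']
    congr 1
    omega
  simp only [← IsBalanced.iff_card_eq hcard]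
  refine ⟨fun hπ ℓ hℓ Λ a b hab => ?_, fun H => bijective_of_forall_isBalanced fun ℓ hℓ => ?_⟩
  · by_cases hb : b = 0
    · subst hb
      simp only [add_zero, map_zero, Finsupp.coe_zero, Pi.zero_apply, mul_zero,
        Finset.sum_const_zero]
      exact isBalanced_maioranaMcFarland_shift_fst g hπ hℓ (by simpa using hab)
    · exact isBalanced_maioranaMcFarland_shift_snd g hπ.injective hℓ a hb
        fun y => ∑ i ∈ Λ, B.repr y i * B.repr b i
  · refine IsBalanced.of_comp_snd (α := GaloisField 2 n) ?_
    have h := H ℓ hℓ ∅ 1 0 (by simp)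
    simp only [add_zero, Finset.sum_empty, ← map_add, maioranaMcFarland_add_fst, one_mul] at h
    exact h
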